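/- Let U be a non-empty subset of Sym(Ω), fix x ∈ U, and let f_L, f_R be functions from stacks of labelled digraphs on Ω to itself. Then (f_L, f_R) is a refiner for U if and only if (f_L, f_L) is a refiner for U·x⁻¹ and f_R(S) = (f_L(S^{x⁻¹}))^x for all stacks S. -/

import Mathlib

/-- A labelled digraph on vertex set `Ω` with labels in `L`:
`vlabel` gives the label of each vertex, and `alabel p = some l` means
`p` is an arc with label `l`, while `alabel p = none` means `p` is not an arc. -/
structure LDigraph (Ω L : Type*) where
  vlabel : Ω → L
  alabel : Ω × Ω → Option L

namespace LDigraph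

/-- The image `Γ^g` of a labelled digraph under a permutation `g`. -/
def map {Ω L : Type*} (g : Equiv.Perm Ω) (Γ : LDigraph Ω L) : LDigraph Ω L where
  vlabel := fun δ => Γ.vlabel (g⁻¹ δ)
  alabel := fun p => Γ.alabel (g⁻¹ p.1, g⁻¹ p.2)

end LDigraph

/-- A stack of labelled digraphs is a finite list of labelled digraphs. -/
abbrev Stack (Ω L : Type*) := List (LDigraph Ω L)

/-- The entrywise action `S^g` of a permutation on a stack. -/
def stackMap {Ω L : Type*} (g : Equiv.Perm Ω) (S : Stack Ω L) : Stack Ω L :=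
  S.map (LDigraph.map g)

/-- `Iso S T` is the set of permutations inducing an isomorphism from `S` to `T`. -/
def Iso {Ω L : Type*} (S T : Stack Ω L) : Set (Equiv.Perm Ω) :=
  {g | stackMap g S = T}

/-- `Auto S = Iso S S` is the set of permutations inducing automorphisms of `S`. -/
def Auto {Ω L : Type*} (S : Stack Ω L) : Set (Equiv.Perm Ω) := Iso S S

/-- A refiner for `V`: for all stacks `S`, `T` and all `g ∈ V`,
if `S^g = T` then `fL(S)^g = fR(T)`. -/
def IsRefiner {Ω L : Type*} (V : Set (Equiv.Perm Ω))
    (fL fR : Stack Ω L → Stack Ω L) : Prop :=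
  ∀ (S T : Stack Ω L) (g : Equiv.Perm Ω), g ∈ V →
    stackMap g S = T → stackMap g (fL S) = fR T

/-! Applying the refiner condition to `x ∈ U` forces `fR` to be the `x`-conjugate of `fL`; once
`fR` has that form, the condition for `g ∈ U` is exactly `x⁻¹ * g`-equivariance of `fL`. -/

section

variable {Ω L : Type*}

lemma stackMap_mul (g h : Equiv.Perm Ω) (S : Stack Ω L) :
    stackMap (g * h) S = stackMap g (stackMap h S) := by
  simp only [stackMap, List.map_map]
  rfl

lemma stackMap_one (S : Stack Ω L) : stackMap (1 : Equiv.Perm Ω) S = S := by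
  simp only [stackMap]
  exact List.map_id'' (fun _ => rfl) S

lemma stackMap_stackMap_inv (g : Equiv.Perm Ω) (S : Stack Ω L) :
    stackMap g (stackMap g⁻¹ S) = S := by
  rw [← stackMap_mul, mul_inv_cancel, stackMap_one]

lemma eq_stackMap_iff_stackMap_inv_eq {g : Equiv.Perm Ω} {S T : Stack Ω L} :
    S = stackMap g T ↔ stackMap g⁻¹ S = T := by
  constructor
  · rintro rfl
    rw [← stackMap_mul, inv_mul_cancel, stackMap_one]
  · rintro rfl
    exact (stackMap_stackMap_inv g S).symm

lemma isRefiner_iff_forall {V : Set (Equiv.Perm Ω)}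
    {fL fR : Stack Ω L → Stack Ω L} :
    IsRefiner V fL fR ↔ ∀ g ∈ V, ∀ S, stackMap g (fL S) = fR (stackMap g S) :=
  ⟨fun h g hg S => h S _ g hg rfl, fun h S _ g hg hST => hST ▸ h g hg S⟩

lemma IsRefiner.eq_stackMap_comp {U : Set (Equiv.Perm Ω)} {x : Equiv.Perm Ω}
    (hx : x ∈ U) {fL fR : Stack Ω L → Stack Ω L} (h : IsRefiner U fL fR) (S : Stack Ω L) :
    fR S = stackMap x (fL (stackMap x⁻¹ S)) :=
  (h _ S x hx (stackMap_stackMap_inv x S)).symm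

lemma isRefiner_iff_isRefiner_inv_mul (U : Set (Equiv.Perm Ω)) (x : Equiv.Perm Ω)
    {fL fR : Stack Ω L → Stack Ω L} (hfR : ∀ S, fR S = stackMap x (fL (stackMap x⁻¹ S))) :
    IsRefiner U fL fR ↔ IsRefiner {v : Equiv.Perm Ω | ∃ u ∈ U, v = x⁻¹ * u} fL fL := by
  have hset : {v : Equiv.Perm Ω | ∃ u ∈ U, v = x⁻¹ * u} = (x⁻¹ * ·) '' U := by
    ext v
    exact exists_congr fun u => and_congr_right fun _ => eq_comm
  rw [hset, isRefiner_iff_forall, isRefiner_iff_forall, Set.forall_mem_image]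
  refine forall₂_congr fun u _ => forall_congr' fun S => ?_
  rw [hfR, eq_stackMap_iff_stackMap_inv_eq, ← stackMap_mul, ← stackMap_mul]

end

/-- The paper's product `u·x⁻¹` ("apply `u`, then `x⁻¹`") is `x⁻¹ * u` in Mathlib's convention,
and `S^g` is `stackMap g S`. -/
theorem stmt_7_general {Ω L : Type*} (U : Set (Equiv.Perm Ω))
    (x : Equiv.Perm Ω) (hx : x ∈ U) (fL fR : Stack Ω L → Stack Ω L) :
    IsRefiner U fL fR ↔
      (IsRefiner {v : Equiv.Perm Ω | ∃ u ∈ U, v = x⁻¹ * u} fL fL ∧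
        ∀ S : Stack Ω L, fR S = stackMap x (fL (stackMap x⁻¹ S))) :=
  ⟨fun h => ⟨(isRefiner_iff_isRefiner_inv_mul U x (h.eq_stackMap_comp hx)).1 h,
      h.eq_stackMap_comp hx⟩,
    fun ⟨hL, hfR⟩ => (isRefiner_iff_isRefiner_inv_mul U x hfR).2 hL⟩

/-- for a non-empty `U ⊆ Sym(Ω)` and `x ∈ U`, `(fL, fR)` is a refiner
for `U` iff `(fL, fL)` is a refiner for `U·x⁻¹` and `fR(S) = (fL(S^{x⁻¹}))^x` for
all stacks `S`.  (Here the paper's product `u·x⁻¹`, meaning "apply `u`, then `x⁻¹`",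
corresponds to `x⁻¹ * u` in Mathlib's convention, and `S^g` is `stackMap g S`.) -/
theorem stmt_7 {Ω L : Type*} [Fintype Ω] (U : Set (Equiv.Perm Ω))
    (x : Equiv.Perm Ω) (hx : x ∈ U) (fL fR : Stack Ω L → Stack Ω L) :
    IsRefiner U fL fR ↔
      (IsRefiner {v : Equiv.Perm Ω | ∃ u ∈ U, v = x⁻¹ * u} fL fL ∧
        ∀ S : Stack Ω L, fR S = stackMap x (fL (stackMap x⁻¹ S))) :=
  stmt_7_general U x hx fL fR
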